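/- arXiv:2209.11322 — 2 statements merged into one kernel-verified Lean document; each statement's English description precedes it below -/
import Mathlib

section
/- For every integer K ≥ 2 and every real x with 0 < |x| ≤ 1/2, the function S_K(x) = sin(πx)/(K·sin(πx/K)) satisfies |S_K(x)| ≥ 2/π. -/
open Real

lemma abs_sin_pi_mul (t : ℝ) (h1 : -1 ≤ t) (h2 : t ≤ 1) :
    |Real.sin (π * t)| = Real.sin (π * |t|) := by
  have hπ := Real.pi_pos
  rcases abs_cases t with ⟨h, h0⟩ | ⟨h, h0⟩
  · rw [h, abs_of_nonneg (Real.sin_nonneg_of_nonneg_of_le_pi (by positivity) (by nlinarith))]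
  · rw [h, mul_neg, Real.sin_neg, abs_of_nonpos]
    exact Real.sin_nonpos_of_nonpos_of_neg_pi_le (by nlinarith) (by nlinarith)

theorem stmt_2 (K : ℕ) (hK : 2 ≤ K) (x : ℝ) (hx0 : 0 < |x|) (hx : |x| ≤ 1 / 2) :
    2 / π ≤ |Real.sin (π * x) / (K * Real.sin (π * x / K))| := by
  have hπ := Real.pi_pos
  have hK0 : (0:ℝ) < K := by exact_mod_cast Nat.lt_of_lt_of_le (by norm_num) hK
  have hK2 : (2:ℝ) ≤ K := by exact_mod_cast hK
  set y := |x| with hy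
  have hxle : -1 ≤ x ∧ x ≤ 1 := abs_le.mp (le_trans hx (by norm_num))
  have hxK : |x / K| = y / K := by rw [abs_div, abs_of_pos hK0]
  have hxK1 : -1 ≤ x / K ∧ x / K ≤ 1 := by
    apply abs_le.mp
    rw [hxK, div_le_one hK0]
    nlinarith
  have e1 : |Real.sin (π * x)| = Real.sin (π * y) := abs_sin_pi_mul x hxle.1 hxle.2
  have e2 : |Real.sin (π * x / K)| = Real.sin (π * (y / K)) := by
    rw [mul_div_assoc, abs_sin_pi_mul (x / K) hxK1.1 hxK1.2, hxK]
  rw [abs_div, abs_mul, Nat.abs_cast, e1, e2]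
  have hyK : y / K ≤ 1 / 4 := by
    rw [div_le_iff₀ hK0]; nlinarith
  have hsinpos : 0 < Real.sin (π * (y / K)) := by
    apply Real.sin_pos_of_pos_of_lt_pi
    · positivity
    · nlinarith [div_nonneg hx0.le hK0.le]
  have hd : 0 < (K : ℝ) * Real.sin (π * (y / K)) := by positivity
  rw [le_div_iff₀ hd]
  have hs1 : Real.sin (π * (y / K)) ≤ π * (y / K) := Real.sin_le (by positivity)
  have hs2 : 2 / π * (π * y) ≤ Real.sin (π * y) :=
    Real.mul_le_sin (by positivity) (by nlinarith)
  have key : 2 / π * ((K : ℝ) * Real.sin (π * (y / K))) ≤ 2 / π * (π * y) := by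
    have heq : (K : ℝ) * (π * (y / K)) = π * y := by field_simp
    calc 2 / π * ((K : ℝ) * Real.sin (π * (y / K)))
        ≤ 2 / π * ((K : ℝ) * (π * (y / K))) := by
          apply mul_le_mul_of_nonneg_left _ (by positivity)
          exact mul_le_mul_of_nonneg_left hs1 hK0.le
      _ = 2 / π * (π * y) := by rw [heq]
  linarith
end

section
/- For every integer K ≥ 4 and every real x with 1 ≤ |x| ≤ K/2, the function S_K(x) = sin(πx)/(K·sin(πx/K)) satisfies |S_K(x)| ≤ 1/(2√2), and in particular |S_K(x)| ≤ 10/(9π). -/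
open Real

lemma sin_lower_aux (t : ℝ) (h0 : 0 ≤ t) (h1 : t ≤ π/4) :
    2 * Real.sqrt 2 / π * t ≤ Real.sin t := by
  have hp := Real.pi_pos
  have hc := strictConcaveOn_sin_Icc.concaveOn
  have hmem0 : (0:ℝ) ∈ Set.Icc (0:ℝ) π := ⟨le_refl _, hp.le⟩
  have hmem1 : π/4 ∈ Set.Icc (0:ℝ) π := ⟨by positivity, by linarith⟩
  have ha : (0:ℝ) ≤ 1 - 4*t/π := by
    rw [sub_nonneg, div_le_one hp]; linarith
  have hb : (0:ℝ) ≤ 4*t/π := by positivity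
  have hab : (1 - 4*t/π) + 4*t/π = 1 := by ring
  have h := hc.2 hmem0 hmem1 ha hb hab
  simp only [smul_eq_mul, Real.sin_zero, Real.sin_pi_div_four, mul_zero, zero_add] at h
  have he : 4*t/π * (π/4) = t := by field_simp
  rw [he] at h
  calc 2 * Real.sqrt 2 / π * t = 4*t/π * (Real.sqrt 2/2) := by ring
  _ ≤ Real.sin t := h

theorem stmt_3 (K : ℕ) (hK : 4 ≤ K) (x : ℝ) (hx1 : 1 ≤ |x|) (hx : |x| ≤ K / 2) :
    |Real.sin (π * x) / (K * Real.sin (π * x / K))| ≤ 1 / (2 * Real.sqrt 2) ∧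
    |Real.sin (π * x) / (K * Real.sin (π * x / K))| ≤ 10 / (9 * π) := by
  have hp := Real.pi_pos
  have hK4 : (4:ℝ) ≤ K := by exact_mod_cast hK
  have hKpos : (0:ℝ) < K := by linarith
  have hs2 : Real.sqrt 2 > 1.414213 := by
    nlinarith [Real.sq_sqrt (by norm_num : (0:ℝ) ≤ 2), Real.sqrt_nonneg 2]
  -- the ratio π|x|/K lies in (0, π/2]
  set t : ℝ := π * |x| / K with ht
  have ht0 : π / K ≤ t := by
    rw [ht]; gcongr; nlinarith
  have ht2 : t ≤ π/2 := by
    rw [ht, div_le_iff₀ hKpos]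
    calc π * |x| ≤ π * (K/2) := by nlinarith
    _ = π/2 * K := by ring
  have htpos : 0 < t := lt_of_lt_of_le (by positivity) ht0
  -- |sin(πx/K)| = sin t
  have habs : |Real.sin (π * x / K)| = Real.sin t := by
    rcases abs_cases x with ⟨h1, h2⟩ | ⟨h1, h2⟩
    · have heq : π * x / K = t := by rw [ht, h1]
      rw [heq]
      exact abs_of_nonneg (Real.sin_nonneg_of_nonneg_of_le_pi htpos.le (by linarith))
    · have : π * x / K = -t := by rw [ht, h1]; ring
      rw [this, Real.sin_neg, abs_neg]
      exact abs_of_nonneg (Real.sin_nonneg_of_nonneg_of_le_pi htpos.le (by linarith))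
  -- key lower bound: sin t ≥ 2√2 / K
  have hkey : 2 * Real.sqrt 2 / K ≤ Real.sin t := by
    rcases le_or_gt t (π/4) with h | h
    · have := sin_lower_aux t htpos.le h
      have h2 : 2 * Real.sqrt 2 / K ≤ 2 * Real.sqrt 2 / π * t := by
        rw [div_le_iff₀ hKpos]
        have : π ≤ t * K := by
          have := ht0
          rw [div_le_iff₀ hKpos] at this
          linarith
        rw [div_mul_eq_mul_div, div_mul_eq_mul_div, le_div_iff₀ hp]
        nlinarith [Real.sqrt_nonneg 2]
      linarith
    · have hmono := Real.strictMonoOn_sin.monotoneOn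
      have h1 : Real.sin (π/4) ≤ Real.sin t := by
        apply hmono ⟨by linarith, by linarith⟩ ⟨by linarith, ht2⟩ h.le
      rw [Real.sin_pi_div_four] at h1
      have : 2 * Real.sqrt 2 / K ≤ Real.sqrt 2 / 2 := by
        rw [div_le_div_iff₀ hKpos (by norm_num)]
        nlinarith [Real.sqrt_nonneg 2]
      linarith
  have hden : 2 * Real.sqrt 2 ≤ |(K : ℝ) * Real.sin (π * x / K)| := by
    rw [abs_mul, abs_of_pos hKpos, habs]
    rw [div_le_iff₀ hKpos] at hkey
    linarith [mul_comm (Real.sin t) (K:ℝ)]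
  have hdpos : (0:ℝ) < 2 * Real.sqrt 2 := by positivity
  have hmain : |Real.sin (π * x) / (K * Real.sin (π * x / K))| ≤ 1 / (2 * Real.sqrt 2) := by
    rw [abs_div]
    exact div_le_div₀ (by norm_num) (Real.abs_sin_le_one _) hdpos hden
  refine ⟨hmain, hmain.trans ?_⟩
  rw [div_le_div_iff₀ hdpos (by positivity)]
  nlinarith [Real.pi_lt_d6, Real.sqrt_nonneg 2]
end
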